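/- For λ ∈ (0,1), the depolarising channel 𝓔_λ(x) = λx + (1−λ)(tr(x)/d)·1 on d×d matrices is Bures contractive: for all distinct density matrices σ, ρ, d_B(𝓔_λ(σ), 𝓔_λ(ρ)) < d_B(σ,ρ). -/

import Mathlib

open scoped Matrix ComplexOrder

/-- The positive square root of a positive semidefinite matrix (junk value `0` otherwise). -/
noncomputable def matSqrt {d : ℕ} (x : Matrix (Fin d) (Fin d) ℂ) : Matrix (Fin d) (Fin d) ℂ :=
  @dite _ x.PosSemidef (Classical.propDecidable _) (fun h => (h.1.eigenvectorUnitary : Matrix (Fin d) (Fin d) ℂ) *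
    Matrix.diagonal ((↑) ∘ (h.1.eigenvalues · |>.sqrt)) *
    (star h.1.eigenvectorUnitary : Matrix (Fin d) (Fin d) ℂ)) (fun _ => 0)

/-- The absolute value `|x| = (xᴴx)^{1/2}` of a matrix. -/
noncomputable def matAbs {d : ℕ} (x : Matrix (Fin d) (Fin d) ℂ) : Matrix (Fin d) (Fin d) ℂ :=
  matSqrt (xᴴ * x)

/-- Fidelity `F(σ,ρ) = tr |σ^{1/2} ρ^{1/2}|`. -/
noncomputable def fid {d : ℕ} (σ ρ : Matrix (Fin d) (Fin d) ℂ) : ℝ :=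
  (matAbs (matSqrt σ * matSqrt ρ)).trace.re

/-- Bures distance `d_B(σ,ρ) = √(1 - F(σ,ρ))`. -/
noncomputable def dB {d : ℕ} (σ ρ : Matrix (Fin d) (Fin d) ℂ) : ℝ :=
  Real.sqrt (1 - fid σ ρ)

/-!
Alberti's variational bound: for every positive definite `X`,
`2 F(σ, ρ) ≤ tr (X σ) + tr (X⁻¹ ρ)`, by Cauchy–Schwarz for the Hilbert–Schmidt inner product after
the polar decomposition of `σ^{1/2} ρ^{1/2}`; for invertible `σ, ρ` equality holds at some `X`,
and `X = 1` there forces `σ = ρ`. The depolarised states `σ' = λσ + c·1`, `ρ' = λρ + c·1` with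
`c = (1 - λ)/d` are invertible, so at their optimiser `X`, which is not `1`,
`2 F(σ', ρ') = λ (tr Xσ + tr X⁻¹ρ) + c (tr X + tr X⁻¹) > 2λ F(σ, ρ) + 2cd`,
using `tr X + tr X⁻¹ - 2d = ‖X^{1/2} - X^{-1/2}‖² > 0`. Hence `F(σ', ρ') > λF + 1 - λ ≥ F`.
-/

open scoped MatrixOrder

namespace Matrix

open RCLike

variable {n 𝕜 : Type*} [Fintype n] [DecidableEq n] [RCLike 𝕜]

omit [DecidableEq n] in
theorem PosSemidef.re_trace_nonneg {M : Matrix n n 𝕜} (hM : M.PosSemidef) : 0 ≤ re M.trace :=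
  (nonneg_iff.mp hM.trace_nonneg).1

theorem isHermitian_sqrt (X : Matrix n n 𝕜) : (CFC.sqrt X).IsHermitian :=
  (nonneg_iff_posSemidef.mp (CFC.sqrt_nonneg X)).isHermitian

theorem PosDef.sqrt {X : Matrix n n 𝕜} (hX : X.PosDef) : (CFC.sqrt X).PosDef :=
  (nonneg_iff_posSemidef.mp (CFC.sqrt_nonneg X)).posDef_iff_isUnit.mpr
    ((CFC.isUnit_sqrt_iff X hX.posSemidef.nonneg).mpr hX.isUnit)

theorem PosDef.exists_posDef_mul_self_eq {X : Matrix n n 𝕜} (hX : X.PosDef) :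
    ∃ Y : Matrix n n 𝕜, Y.PosDef ∧ Y * Y = X :=
  ⟨CFC.sqrt X, hX.sqrt, CFC.sqrt_mul_sqrt_self X hX.posSemidef.nonneg⟩

omit [DecidableEq n] in
theorem trace_conjTranspose_mul_self_mul_of_isHermitian {M S : Matrix n n 𝕜}
    (hM : M.IsHermitian) (hS : S.IsHermitian) :
    ((M * S)ᴴ * (M * S)).trace = (M * M * (S * S)).trace := by
  rw [conjTranspose_mul, hM.eq, hS.eq, mul_assoc, trace_mul_comm S]
  simp only [mul_assoc]

/-- The witness is `W = C (CᴴC)^{-1/2}`, the inverse square root being taken on the support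
(`(√0)⁻¹ = 0`): the partial isometry of the polar decomposition `C = W |C|`. -/
theorem exists_isIdempotentElem_mul_conjTranspose_conjTranspose_mul_eq_sqrt (C : Matrix n n 𝕜) :
    ∃ W : Matrix n n 𝕜, IsIdempotentElem (W * Wᴴ) ∧ Wᴴ * C = CFC.sqrt (Cᴴ * C) := by
  set H := Cᴴ * C
  have hH : IsSelfAdjoint H := isHermitian_conjTranspose_mul_self C
  have hcont (f : ℝ → ℝ) : ContinuousOn f (spectrum ℝ H) := H.finite_real_spectrum.continuousOn f
  set K := cfc (fun x : ℝ => (√x)⁻¹) H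
  have hK : Kᴴ = K := IsSelfAdjoint.cfc.star_eq
  have hKH : K * H = cfc Real.sqrt H := by
    conv_lhs => rw [← cfc_id' ℝ H, ← cfc_mul _ _ H (hcont _) (hcont _)]
    congr 1; funext x
    rcases le_or_gt x 0 with hx | hx
    · simp [Real.sqrt_eq_zero'.mpr hx]
    · field_simp; exact (Real.sq_sqrt hx.le).symm
  have hKHKK : K * H * K * K = K := by
    rw [hKH, ← cfc_mul _ _ H (hcont _) (hcont _), ← cfc_mul _ _ H (hcont _) (hcont _)]
    congr 1; funext x
    rcases le_or_gt x 0 with hx | hx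
    · simp [Real.sqrt_eq_zero'.mpr hx]
    · have := Real.sqrt_pos.mpr hx
      field_simp
  refine ⟨C * K, ?_, ?_⟩
  · rw [IsIdempotentElem, conjTranspose_mul, hK]
    calc C * K * (K * Cᴴ) * (C * K * (K * Cᴴ)) = C * K * (K * H * K * K) * Cᴴ := by
          simp only [H, mul_assoc]
      _ = C * K * (K * Cᴴ) := by rw [hKHKK, mul_assoc]
  · rw [conjTranspose_mul, hK, mul_assoc, hKH,
      CFC.sqrt_eq_real_sqrt H (posSemidef_conjTranspose_mul_self C).nonneg, cfcₙ_eq_cfc]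

theorem re_trace_mul_mul_conjTranspose_le {Q : Matrix n n 𝕜} (hQ : IsIdempotentElem Q)
    (hQH : Q.IsHermitian) (A : Matrix n n 𝕜) :
    re (A * Q * Aᴴ).trace ≤ re (A * Aᴴ).trace := by
  have hQ' : (1 - Q) * (1 - Q)ᴴ = 1 - Q := by
    rw [conjTranspose_sub, conjTranspose_one, hQH.eq]; exact hQ.one_sub.eq
  have hsplit : A * Aᴴ - A * Q * Aᴴ = A * (1 - Q) * (A * (1 - Q))ᴴ :=
    calc A * Aᴴ - A * Q * Aᴴ = A * (1 - Q) * Aᴴ := by noncomm_ring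
      _ = A * ((1 - Q) * (1 - Q)ᴴ) * Aᴴ := by rw [hQ']
      _ = A * (1 - Q) * (A * (1 - Q))ᴴ := by rw [conjTranspose_mul]; simp only [mul_assoc]
  have := (posSemidef_self_mul_conjTranspose (A * (1 - Q))).re_trace_nonneg
  rw [← hsplit, trace_sub, map_sub] at this
  linarith

theorem two_mul_re_trace_sqrt_le (A B : Matrix n n 𝕜) :
    2 * re (CFC.sqrt ((Aᴴ * B)ᴴ * (Aᴴ * B))).trace ≤ re (Aᴴ * A).trace + re (Bᴴ * B).trace := by
  obtain ⟨W, hWW, hW⟩ :=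
    exists_isIdempotentElem_mul_conjTranspose_conjTranspose_mul_eq_sqrt (Aᴴ * B)
  set V := A * W
  have htr : CFC.sqrt ((Aᴴ * B)ᴴ * (Aᴴ * B)) = Vᴴ * B := by
    rw [← hW, conjTranspose_mul, mul_assoc]
  have hVV : re (Vᴴ * V).trace ≤ re (Aᴴ * A).trace := by
    rw [trace_mul_comm, ← trace_mul_comm A, conjTranspose_mul, ← mul_assoc, mul_assoc A]
    exact re_trace_mul_mul_conjTranspose_le hWW (isHermitian_mul_conjTranspose_self W) A
  have hBV : re (Bᴴ * V).trace = re (Vᴴ * B).trace := by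
    rw [← conjTranspose_conjTranspose V, ← conjTranspose_mul, trace_conjTranspose,
      conjTranspose_conjTranspose, star_def, conj_re]
  have hsq := (posSemidef_conjTranspose_mul_self (V - B)).re_trace_nonneg
  rw [conjTranspose_sub, sub_mul, mul_sub, mul_sub, trace_sub, trace_sub, trace_sub,
    map_sub, map_sub, map_sub, hBV] at hsq
  rw [htr]
  linarith

theorem two_mul_card_lt_re_trace_add_re_trace_inv {X : Matrix n n 𝕜} (hX : X.PosDef)
    (hX1 : X ≠ 1) : 2 * Fintype.card n < re X.trace + re X⁻¹.trace := by
  obtain ⟨Y, hYpos, rfl⟩ := hX.exists_posDef_mul_self_eq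
  have hY : IsUnit Y.det := (isUnit_iff_isUnit_det Y).mp hYpos.isUnit
  have hD : (Y - Y⁻¹)ᴴ * (Y - Y⁻¹) = Y * Y - 2 • 1 + (Y * Y)⁻¹ := by
    rw [conjTranspose_sub, conjTranspose_nonsing_inv, hYpos.isHermitian.eq, Matrix.mul_inv_rev,
      sub_mul, mul_sub, mul_sub, mul_nonsing_inv _ hY, nonsing_inv_mul _ hY]
    abel
  have hD0 : Y - Y⁻¹ ≠ 0 := fun h =>
    hX1 <| (congrArg (Y * ·) (sub_eq_zero.mp h)).trans (mul_nonsing_inv _ hY)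
  have hpos : 0 < ((Y - Y⁻¹)ᴴ * (Y - Y⁻¹)).trace :=
    (posSemidef_conjTranspose_mul_self _).trace_nonneg.lt_of_ne
      (Ne.symm (trace_conjTranspose_mul_self_eq_zero_iff.not.mpr hD0))
  rw [hD, trace_add, trace_sub, trace_smul, trace_one] at hpos
  have := (pos_iff.mp hpos).1
  simp only [map_add, map_sub, map_nsmul, natCast_re] at this
  rw [nsmul_eq_mul, Nat.cast_ofNat] at this
  linarith

omit [Fintype n] in
theorem PosSemidef.posDef_smul_add_smul_one {M : Matrix n n ℂ} (hM : M.PosSemidef) {l c : ℝ}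
    (hl : 0 ≤ l) (hc : 0 < c) : ((l : ℂ) • M + (c : ℂ) • 1).PosDef :=
  PosDef.posSemidef_add (hM.smul (by exact_mod_cast hl)) (PosDef.one.smul (by exact_mod_cast hc))

theorem re_trace_mul_smul_add_smul_one (X M : Matrix n n ℂ) (l c : ℝ) :
    (X * ((l : ℂ) • M + (c : ℂ) • 1)).trace.re = l * (X * M).trace.re + c * X.trace.re := by
  simp [mul_add, trace_add, trace_smul]

end Matrix

open Matrix

section Fidelity

variable {d : ℕ}

theorem matSqrt_eq_sqrt {x : Matrix (Fin d) (Fin d) ℂ} (h : x.PosSemidef) :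
    matSqrt x = CFC.sqrt x := by
  rw [matSqrt, dif_pos h, CFC.sqrt_eq_cfc, cfc_nnreal_eq_real _ x h.nonneg, h.1.cfc_eq]
  simp only [IsHermitian.cfc, Unitary.conjStarAlgAut_apply]
  congr 3
  funext i
  simp [max_eq_left (h.eigenvalues_nonneg i)]

theorem fid_eq_re_trace_sqrt {σ ρ : Matrix (Fin d) (Fin d) ℂ} (hσ : σ.PosSemidef)
    (hρ : ρ.PosSemidef) :
    fid σ ρ = (CFC.sqrt ((CFC.sqrt σ * CFC.sqrt ρ)ᴴ * (CFC.sqrt σ * CFC.sqrt ρ))).trace.re := by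
  rw [fid, matAbs, matSqrt_eq_sqrt hσ, matSqrt_eq_sqrt hρ,
    matSqrt_eq_sqrt (posSemidef_conjTranspose_mul_self _)]

theorem two_mul_fid_le {σ ρ X : Matrix (Fin d) (Fin d) ℂ} (hσ : σ.PosSemidef)
    (hρ : ρ.PosSemidef) (hX : X.PosDef) :
    2 * fid σ ρ ≤ (X * σ).trace.re + (X⁻¹ * ρ).trace.re := by
  obtain ⟨Y, hYpos, rfl⟩ := hX.exists_posDef_mul_self_eq
  have hY : IsUnit Y.det := (isUnit_iff_isUnit_det Y).mp hYpos.isUnit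
  have hYinvH : (Y⁻¹).IsHermitian := by
    rw [IsHermitian, conjTranspose_nonsing_inv, hYpos.isHermitian.eq]
  have hcross : (Y * CFC.sqrt σ)ᴴ * (Y⁻¹ * CFC.sqrt ρ) = CFC.sqrt σ * CFC.sqrt ρ := by
    rw [conjTranspose_mul, (isHermitian_sqrt σ).eq, hYpos.isHermitian.eq, mul_assoc,
      mul_nonsing_inv_cancel_left _ _ hY]
  have h := two_mul_re_trace_sqrt_le (Y * CFC.sqrt σ) (Y⁻¹ * CFC.sqrt ρ)
  rw [hcross,
    trace_conjTranspose_mul_self_mul_of_isHermitian hYpos.isHermitian (isHermitian_sqrt σ),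
    trace_conjTranspose_mul_self_mul_of_isHermitian hYinvH (isHermitian_sqrt ρ),
    ← Matrix.mul_inv_rev, CFC.sqrt_mul_sqrt_self σ hσ.nonneg,
    CFC.sqrt_mul_sqrt_self ρ hρ.nonneg] at h
  rw [fid_eq_re_trace_sqrt hσ hρ]
  exact h

theorem fid_le_one {σ ρ : Matrix (Fin d) (Fin d) ℂ} (hσ : σ.PosSemidef) (hρ : ρ.PosSemidef)
    (hσ1 : σ.trace = 1) (hρ1 : ρ.trace = 1) : fid σ ρ ≤ 1 := by
  have := two_mul_fid_le hσ hρ PosDef.one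
  rw [inv_one, one_mul, one_mul, hσ1, hρ1, Complex.one_re] at this
  linarith

/-- With `r = ρ^{1/2}` and `T = |σ^{1/2} r| = (r σ r)^{1/2}`, the optimiser is `X = r T⁻¹ r`. -/
theorem exists_posDef_fid_eq {σ ρ : Matrix (Fin d) (Fin d) ℂ} (hσ : σ.PosDef) (hρ : ρ.PosDef) :
    ∃ X : Matrix (Fin d) (Fin d) ℂ, X.PosDef ∧ (X * σ).trace.re = fid σ ρ ∧
      (X⁻¹ * ρ).trace.re = fid σ ρ ∧ (X = 1 → σ = ρ) := by
  set r := CFC.sqrt ρ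
  have hrH : r.IsHermitian := isHermitian_sqrt ρ
  have hru : IsUnit r := hρ.sqrt.isUnit
  have hr : IsUnit r.det := (isUnit_iff_isUnit_det r).mp hru
  have hrr : r * r = ρ := CFC.sqrt_mul_sqrt_self ρ hρ.posSemidef.nonneg
  have hconj {M : Matrix (Fin d) (Fin d) ℂ} (hM : M.PosDef) : (r * M * r).PosDef := by
    simpa [star_eq_conjTranspose, hrH.eq] using (IsUnit.posDef_star_left_conjugate_iff hru).mpr hM
  set T := CFC.sqrt (r * σ * r)
  have hTT : T * T = r * σ * r := CFC.sqrt_mul_sqrt_self _ (hconj hσ).posSemidef.nonneg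
  have hT : IsUnit T.det := (isUnit_iff_isUnit_det T).mp (hconj hσ).sqrt.isUnit
  have hfid : fid σ ρ = T.trace.re := by
    rw [fid_eq_re_trace_sqrt hσ.posSemidef hρ.posSemidef, conjTranspose_mul,
      (isHermitian_sqrt σ).eq, hrH.eq, mul_assoc, ← mul_assoc (CFC.sqrt σ),
      CFC.sqrt_mul_sqrt_self σ hσ.posSemidef.nonneg, ← mul_assoc]
  have hinv : (r * T⁻¹ * r)⁻¹ = r⁻¹ * T * r⁻¹ := by
    rw [Matrix.mul_inv_rev, Matrix.mul_inv_rev, nonsing_inv_nonsing_inv T hT, mul_assoc]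
  refine ⟨r * T⁻¹ * r, hconj (hconj hσ).sqrt.inv, ?_, ?_, fun hX1 => ?_⟩
  · rw [hfid]
    congr 1
    calc (r * T⁻¹ * r * σ).trace = (T⁻¹ * (r * σ * r)).trace := by
          rw [mul_assoc, mul_assoc, trace_mul_comm]; simp only [mul_assoc]
      _ = T.trace := by rw [← hTT, nonsing_inv_mul_cancel_left _ _ hT]
  · rw [hfid, hinv]
    congr 1
    calc (r⁻¹ * T * r⁻¹ * ρ).trace = (r⁻¹ * (T * r)).trace := by
          rw [← hrr, ← mul_assoc, nonsing_inv_mul_cancel_right _ _ hr, mul_assoc]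
      _ = T.trace := by rw [trace_mul_comm, mul_nonsing_inv_cancel_right _ _ hr]
  · have hTρ : T = ρ := by
      rw [hX1, inv_one] at hinv
      calc T = r * (r⁻¹ * T * r⁻¹) * r := by
            simp only [mul_assoc]
            rw [nonsing_inv_mul _ hr, mul_one, mul_nonsing_inv_cancel_left _ _ hr]
        _ = ρ := by rw [← hinv, mul_one, hrr]
    have : r * σ * r = r * ρ * r := by rw [← hTT, hTρ, ← hrr]; simp only [mul_assoc]
    exact hru.mul_left_cancel (hru.mul_right_cancel (by simpa only [mul_assoc] using this))

theorem lt_fid_smul_add_smul_one {σ ρ : Matrix (Fin d) (Fin d) ℂ} (hσ : σ.PosSemidef)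
    (hρ : ρ.PosSemidef) (hne : σ ≠ ρ) {l c : ℝ} (hl : 0 < l) (hc : 0 < c) :
    l * fid σ ρ + c * d < fid ((l : ℂ) • σ + (c : ℂ) • 1) ((l : ℂ) • ρ + (c : ℂ) • 1) := by
  obtain ⟨X, hX, hXσ, hXρ, hX1⟩ := exists_posDef_fid_eq
    (hσ.posDef_smul_add_smul_one hl.le hc) (hρ.posDef_smul_add_smul_one hl.le hc)
  have hXne : X ≠ 1 := fun h =>
    hne (smul_right_injective _ (by exact_mod_cast hl.ne') (add_right_cancel (hX1 h)))
  have hfid := two_mul_fid_le hσ hρ hX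
  have hcard := two_mul_card_lt_re_trace_add_re_trace_inv hX hXne
  rw [re_trace_mul_smul_add_smul_one] at hXσ hXρ
  simp only [Fintype.card_fin, RCLike.re_to_complex] at hcard
  linarith [mul_le_mul_of_nonneg_left hfid hl.le, mul_lt_mul_of_pos_left hcard hc]

end Fidelity

/-- for λ ∈ (0,1), the depolarising channel
𝓔_λ(x) = λx + (1-λ)(tr x / d)·1 is Bures contractive. -/
theorem depolarising_bures_contractive {d : ℕ} (l : ℝ) (hl0 : 0 < l) (hl1 : l < 1)
    (σ ρ : Matrix (Fin d) (Fin d) ℂ)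
    (hσ : σ.PosSemidef) (hρ : ρ.PosSemidef)
    (hσ1 : σ.trace = 1) (hρ1 : ρ.trace = 1) (hne : σ ≠ ρ) :
    dB ((l : ℂ) • σ + (((1 : ℂ) - (l : ℂ)) * (σ.trace / (d : ℂ))) • (1 : Matrix (Fin d) (Fin d) ℂ))
       ((l : ℂ) • ρ + (((1 : ℂ) - (l : ℂ)) * (ρ.trace / (d : ℂ))) • (1 : Matrix (Fin d) (Fin d) ℂ))
      < dB σ ρ := by
  have hd : (0 : ℝ) < d := Nat.cast_pos.mpr <| Nat.pos_of_ne_zero fun h => by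
    subst h; exact hne (Subsingleton.elim _ _)
  set c : ℝ := (1 - l) / d
  have hc : 0 < c := div_pos (by linarith) hd
  have hcd : c * d = 1 - l := div_mul_cancel₀ _ hd.ne'
  have hcoef : ((1 : ℂ) - (l : ℂ)) * (1 / (d : ℂ)) = (c : ℂ) := by
    simp only [c, Complex.ofReal_div, Complex.ofReal_sub, Complex.ofReal_one,
      Complex.ofReal_natCast]
    ring
  have htrace {τ : Matrix (Fin d) (Fin d) ℂ} (hτ : τ.trace = 1) :
      ((l : ℂ) • τ + (c : ℂ) • 1).trace = 1 := by
    rw [trace_add, trace_smul, trace_smul, hτ, trace_one, Fintype.card_fin, smul_eq_mul,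
      smul_eq_mul, mul_one, ← Complex.ofReal_natCast, ← Complex.ofReal_mul, hcd]
    push_cast; ring
  rw [hσ1, hρ1, hcoef]
  have hlt := lt_fid_smul_add_smul_one hσ hρ hne hl0 hc
  have hle := fid_le_one hσ hρ hσ1 hρ1
  have hle' := fid_le_one (hσ.posDef_smul_add_smul_one hl0.le hc).posSemidef
    (hρ.posDef_smul_add_smul_one hl0.le hc).posSemidef (htrace hσ1) (htrace hρ1)
  rw [hcd] at hlt
  rw [dB, dB]
  exact Real.sqrt_lt_sqrt (by linarith)
    (by linarith [mul_nonneg (sub_nonneg.mpr hl1.le) (sub_nonneg.mpr hle)])
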